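/- arXiv:1506.05453 — 2 statements merged into one kernel-verified Lean document; each statement's English description precedes it below -/
import Mathlib

section
/- Let M be an Orlicz function. Then C_∞(M) = { real sequences x = (x_k)_{k≥1} : there exists ρ > 0 with sup_{i≥1} (1/i) Σ_{k=1}^{i} M(|x_k|/ρ) < ∞ } is a complete metric space with respect to the metric η₂(x,y) = inf{ ρ > 0 : sup_{i≥1} (1/i) Σ_{k=1}^{i} M(|x_k − y_k|/ρ) ≤ 1 }. -/
/-!
Statement 4 (Paper: Lemma 2.2(ii)).  `C_∞(M)` is a complete metric space with
respect to the metric `η₂`.  Sequences are indexed so that `x k` represents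
the paper's `x_{k+1}`.
-/

open scoped ENNReal

/-- An Orlicz function. -/
def IsOrliczFunction (M : ℝ → ℝ) : Prop :=
  ContinuousOn M (Set.Ici 0) ∧ MonotoneOn M (Set.Ici 0) ∧ ConvexOn ℝ (Set.Ici 0) M ∧
    M 0 = 0 ∧ (∀ x : ℝ, 0 < x → 0 < M x) ∧ Filter.Tendsto M Filter.atTop Filter.atTop

/-- The Cesàro average `(1/i) ∑_{k=1}^{i} M (|x_k| / ρ)`, where `i` here is `i+1`. -/
noncomputable def cesTerm (M : ℝ → ℝ) (x : ℕ → ℝ) (ρ : ℝ) (i : ℕ) : ℝ :=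
  (1 / (i + 1 : ℝ)) * ∑ k ∈ Finset.range (i + 1), M (|x k| / ρ)

/-- `sup_{i ≥ 1} (1/i) ∑_{k=1}^{i} M (|x_k| / ρ)`, valued in `ℝ≥0∞`. -/
noncomputable def cesSup (M : ℝ → ℝ) (x : ℕ → ℝ) (ρ : ℝ) : ℝ≥0∞ :=
  ⨆ i : ℕ, ENNReal.ofReal (cesTerm M x ρ i)

/-- The space `C_∞(M)`. -/
def CInftyM (M : ℝ → ℝ) : Set (ℕ → ℝ) :=
  {x | ∃ ρ > 0, cesSup M x ρ < ⊤}

/-- The metric `η₂`. -/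
noncomputable def eta2 (M : ℝ → ℝ) (x y : ℕ → ℝ) : ℝ :=
  sInf {ρ : ℝ | 0 < ρ ∧ cesSup M (fun k => x k - y k) ρ ≤ 1}

section lemmas
variable {M : ℝ → ℝ} (hM : IsOrliczFunction M)
include hM

lemma M_nonneg {t : ℝ} (ht : 0 ≤ t) : 0 ≤ M t := by
  have := hM.2.1 (Set.self_mem_Ici) ht ht
  rw [hM.2.2.2.1] at this; exact this

lemma cesTerm_nonneg (x : ℕ → ℝ) {ρ : ℝ} (hρ : 0 < ρ) (i : ℕ) : 0 ≤ cesTerm M x ρ i := by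
  apply mul_nonneg (by positivity)
  exact Finset.sum_nonneg fun k _ => M_nonneg hM (by positivity)

/-- scaling: M(a/ρ') ≤ (ρ/ρ') M(a/ρ) for 0 < ρ ≤ ρ'. -/
lemma M_scale {a ρ ρ' : ℝ} (ha : 0 ≤ a) (h1 : 0 < ρ) (h : ρ ≤ ρ') :
    M (a / ρ') ≤ (ρ / ρ') * M (a / ρ) := by
  have hρ' : 0 < ρ' := lt_of_lt_of_le h1 h
  have ht0 : (0:ℝ) ≤ ρ / ρ' := by positivity
  have ht1 : ρ / ρ' ≤ 1 := (div_le_one hρ').mpr h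
  have key := hM.2.2.1.2 (Set.mem_Ici.mpr (by positivity : (0:ℝ) ≤ a / ρ))
    (Set.self_mem_Ici) ht0 (sub_nonneg.mpr ht1) (by ring)
  simp only [smul_eq_mul, hM.2.2.2.1, mul_zero, add_zero] at key
  have harg : ρ / ρ' * (a / ρ) = a / ρ' := by field_simp
  rwa [harg] at key

lemma M_mono' {a b : ℝ} (ha : 0 ≤ a) (hab : a ≤ b) : M a ≤ M b :=
  hM.2.1 (Set.mem_Ici.mpr ha) (Set.mem_Ici.mpr (ha.trans hab)) hab

lemma cesTerm_anti (x : ℕ → ℝ) {ρ ρ' : ℝ} (h1 : 0 < ρ) (h : ρ ≤ ρ') (i : ℕ) :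
    cesTerm M x ρ' i ≤ cesTerm M x ρ i := by
  have hρ' : 0 < ρ' := lt_of_lt_of_le h1 h
  apply mul_le_mul_of_nonneg_left _ (by positivity)
  apply Finset.sum_le_sum
  intro k _
  exact M_mono' hM (by positivity) (by
    apply div_le_div_of_nonneg_left (abs_nonneg _) h1 h)

lemma cesTerm_scale (x : ℕ → ℝ) {ρ ρ' : ℝ} (h1 : 0 < ρ) (h : ρ ≤ ρ') (i : ℕ) :
    cesTerm M x ρ' i ≤ (ρ / ρ') * cesTerm M x ρ i := by
  have hs : ∑ k ∈ Finset.range (i+1), M (|x k| / ρ')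
      ≤ (ρ / ρ') * ∑ k ∈ Finset.range (i+1), M (|x k| / ρ) := by
    rw [Finset.mul_sum]
    exact Finset.sum_le_sum fun k _ => M_scale hM (abs_nonneg _) h1 h
  calc cesTerm M x ρ' i
      ≤ (1 / (i + 1 : ℝ)) * ((ρ / ρ') * ∑ k ∈ Finset.range (i+1), M (|x k| / ρ)) :=
        mul_le_mul_of_nonneg_left hs (by positivity)
    _ = (ρ / ρ') * cesTerm M x ρ i := by unfold cesTerm; ring

lemma cesSup_anti (x : ℕ → ℝ) {ρ ρ' : ℝ} (h1 : 0 < ρ) (h : ρ ≤ ρ') :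
    cesSup M x ρ' ≤ cesSup M x ρ := by
  apply iSup_mono
  intro i
  exact ENNReal.ofReal_le_ofReal (cesTerm_anti hM x h1 h i)

omit hM in
lemma cesSup_le_one_iff (x : ℕ → ℝ) (ρ : ℝ) :
    cesSup M x ρ ≤ 1 ↔ ∀ i, cesTerm M x ρ i ≤ 1 := by
  rw [cesSup, iSup_le_iff]
  refine forall_congr' fun i => ?_
  rw [ENNReal.ofReal_le_one]

lemma cesTerm_le_toReal {x : ℕ → ℝ} {ρ : ℝ} (hρ : 0 < ρ) (hfin : cesSup M x ρ < ⊤) (i : ℕ) :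
    cesTerm M x ρ i ≤ (cesSup M x ρ).toReal := by
  have h1 : ENNReal.ofReal (cesTerm M x ρ i) ≤ cesSup M x ρ :=
    le_iSup (fun i => ENNReal.ofReal (cesTerm M x ρ i)) i
  have := ENNReal.toReal_mono hfin.ne h1
  rwa [ENNReal.toReal_ofReal (cesTerm_nonneg hM x hρ i)] at this

lemma exists_mem_S {x : ℕ → ℝ} (hx : x ∈ CInftyM M) :
    ∃ ρ, 0 < ρ ∧ cesSup M x ρ ≤ 1 := by
  obtain ⟨ρ₀, hρ₀, hfin⟩ := hx
  set B := (cesSup M x ρ₀).toReal with hB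
  have h0B : 0 ≤ B := ENNReal.toReal_nonneg
  have hB1 : (1:ℝ) ≤ max 1 B := le_max_left _ _
  have hmaxpos : (0:ℝ) < max 1 B := lt_of_lt_of_le one_pos hB1
  refine ⟨ρ₀ * max 1 B, by positivity, ?_⟩
  rw [cesSup_le_one_iff]
  intro i
  calc cesTerm M x (ρ₀ * max 1 B) i
      ≤ (ρ₀ / (ρ₀ * max 1 B)) * cesTerm M x ρ₀ i :=
        cesTerm_scale hM x hρ₀ (le_mul_of_one_le_right hρ₀.le hB1) i
    _ ≤ (ρ₀ / (ρ₀ * max 1 B)) * B :=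
        mul_le_mul_of_nonneg_left (cesTerm_le_toReal hM hρ₀ hfin i) (by positivity)
    _ ≤ 1 := by
        have he : (ρ₀ / (ρ₀ * max 1 B)) * B = B / max 1 B := by
          field_simp
        rw [he, div_le_one hmaxpos]
        exact le_max_right 1 B

end lemmas

section stage2
variable {M : ℝ → ℝ} (hM : IsOrliczFunction M)
include hM

lemma convex_two {a b ρ₁ ρ₂ : ℝ} (ha : 0 ≤ a) (hb : 0 ≤ b) (h1 : 0 < ρ₁) (h2 : 0 < ρ₂) :
    M ((a + b) / (ρ₁ + ρ₂)) ≤ (ρ₁/(ρ₁+ρ₂)) * M (a/ρ₁) + (ρ₂/(ρ₁+ρ₂)) * M (b/ρ₂) := by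
  have hs : (0:ℝ) < ρ₁ + ρ₂ := by linarith
  have key := hM.2.2.1.2 (Set.mem_Ici.mpr (by positivity : (0:ℝ) ≤ a / ρ₁))
    (Set.mem_Ici.mpr (by positivity : (0:ℝ) ≤ b / ρ₂))
    (by positivity : (0:ℝ) ≤ ρ₁/(ρ₁+ρ₂)) (by positivity : (0:ℝ) ≤ ρ₂/(ρ₁+ρ₂))
    (by field_simp)
  simp only [smul_eq_mul] at key
  have harg : ρ₁/(ρ₁+ρ₂) * (a/ρ₁) + ρ₂/(ρ₁+ρ₂) * (b/ρ₂) = (a+b)/(ρ₁+ρ₂) := by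
    field_simp
  rwa [harg] at key

lemma cesTerm_combo {p q r : ℕ → ℝ} (hpt : ∀ k, |r k| ≤ |p k| + |q k|) {ρ₁ ρ₂ : ℝ}
    (h1 : 0 < ρ₁) (h2 : 0 < ρ₂) (i : ℕ) :
    cesTerm M r (ρ₁+ρ₂) i
      ≤ (ρ₁/(ρ₁+ρ₂)) * cesTerm M p ρ₁ i + (ρ₂/(ρ₁+ρ₂)) * cesTerm M q ρ₂ i := by
  have hs : (0:ℝ) < ρ₁ + ρ₂ := by linarith
  have hterm : ∀ k, M (|r k|/(ρ₁+ρ₂))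
      ≤ (ρ₁/(ρ₁+ρ₂)) * M (|p k|/ρ₁) + (ρ₂/(ρ₁+ρ₂)) * M (|q k|/ρ₂) := by
    intro k
    refine le_trans (M_mono' hM (by positivity) ?_) (convex_two hM (abs_nonneg _) (abs_nonneg _) h1 h2)
    exact div_le_div_of_nonneg_right (hpt k) hs.le |>.trans_eq rfl
  have hsum := Finset.sum_le_sum (fun k (_ : k ∈ Finset.range (i+1)) => hterm k)
  calc cesTerm M r (ρ₁+ρ₂) i
      ≤ (1/(i+1:ℝ)) * ∑ k ∈ Finset.range (i+1),
          ((ρ₁/(ρ₁+ρ₂)) * M (|p k|/ρ₁) + (ρ₂/(ρ₁+ρ₂)) * M (|q k|/ρ₂)) :=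
        mul_le_mul_of_nonneg_left hsum (by positivity)
    _ = (ρ₁/(ρ₁+ρ₂)) * cesTerm M p ρ₁ i + (ρ₂/(ρ₁+ρ₂)) * cesTerm M q ρ₂ i := by
        unfold cesTerm
        rw [Finset.sum_add_distrib, ← Finset.mul_sum, ← Finset.mul_sum]
        ring

lemma cin_sub_mem {x y : ℕ → ℝ} (hx : x ∈ CInftyM M) (hy : y ∈ CInftyM M) :
    (fun k => x k - y k) ∈ CInftyM M := by
  obtain ⟨ρ₁, h1, f1⟩ := hx
  obtain ⟨ρ₂, h2, f2⟩ := hy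
  have hs : (0:ℝ) < ρ₁ + ρ₂ := by linarith
  refine ⟨ρ₁ + ρ₂, hs, ?_⟩
  set B₁ := (cesSup M x ρ₁).toReal
  set B₂ := (cesSup M y ρ₂).toReal
  have hb : ∀ i, cesTerm M (fun k => x k - y k) (ρ₁+ρ₂) i
      ≤ (ρ₁/(ρ₁+ρ₂)) * B₁ + (ρ₂/(ρ₁+ρ₂)) * B₂ := by
    intro i
    refine le_trans (cesTerm_combo hM (fun k => abs_sub _ _) h1 h2 i) ?_
    gcongr
    · exact cesTerm_le_toReal hM h1 f1 i
    · exact cesTerm_le_toReal hM h2 f2 i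
  refine lt_of_le_of_lt (iSup_le fun i => ENNReal.ofReal_le_ofReal (hb i)) ENNReal.ofReal_lt_top

lemma S_add {x y z : ℕ → ℝ} {ρ₁ ρ₂ : ℝ} (h1 : 0 < ρ₁) (h2 : 0 < ρ₂)
    (hxy : cesSup M (fun k => x k - y k) ρ₁ ≤ 1)
    (hyz : cesSup M (fun k => y k - z k) ρ₂ ≤ 1) :
    cesSup M (fun k => x k - z k) (ρ₁+ρ₂) ≤ 1 := by
  have hs : (0:ℝ) < ρ₁ + ρ₂ := by linarith
  rw [cesSup_le_one_iff] at hxy hyz ⊢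
  intro i
  calc cesTerm M (fun k => x k - z k) (ρ₁+ρ₂) i
      ≤ (ρ₁/(ρ₁+ρ₂)) * cesTerm M (fun k => x k - y k) ρ₁ i
        + (ρ₂/(ρ₁+ρ₂)) * cesTerm M (fun k => y k - z k) ρ₂ i :=
        cesTerm_combo hM (fun k => abs_sub_le _ _ _) h1 h2 i
    _ ≤ (ρ₁/(ρ₁+ρ₂)) * 1 + (ρ₂/(ρ₁+ρ₂)) * 1 := by
        gcongr
        · exact hxy i
        · exact hyz i
    _ = 1 := by field_simp

omit hM in
lemma eta2_bddBelow (x y : ℕ → ℝ) :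
    BddBelow {ρ : ℝ | 0 < ρ ∧ cesSup M (fun k => x k - y k) ρ ≤ 1} :=
  ⟨0, fun ρ hρ => hρ.1.le⟩

omit hM in
lemma eta2_nonneg (x y : ℕ → ℝ) : 0 ≤ eta2 M x y :=
  Real.sInf_nonneg fun ρ hρ => hρ.1.le

omit hM in
lemma eta2_le_of {x y : ℕ → ℝ} {ε : ℝ} (hε : 0 < ε)
    (h : cesSup M (fun k => x k - y k) ε ≤ 1) : eta2 M x y ≤ ε :=
  csInf_le (eta2_bddBelow x y) ⟨hε, h⟩

lemma S_nonempty {x y : ℕ → ℝ} (hx : x ∈ CInftyM M) (hy : y ∈ CInftyM M) :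
    {ρ : ℝ | 0 < ρ ∧ cesSup M (fun k => x k - y k) ρ ≤ 1}.Nonempty := by
  obtain ⟨ρ, hρ, hle⟩ := exists_mem_S hM (cin_sub_mem hM hx hy)
  exact ⟨ρ, hρ, hle⟩

lemma cesSup_le_one_of_eta2_lt {x y : ℕ → ℝ} {ε : ℝ} (hx : x ∈ CInftyM M)
    (hy : y ∈ CInftyM M) (h : eta2 M x y < ε) :
    cesSup M (fun k => x k - y k) ε ≤ 1 := by
  obtain ⟨ρ, hρS, hρε⟩ := exists_lt_of_csInf_lt (S_nonempty hM hx hy) h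
  exact le_trans (cesSup_anti hM _ hρS.1 hρε.le) hρS.2

lemma eta2_self (x : ℕ → ℝ) : eta2 M x x = 0 := by
  have h0 : ∀ ρ : ℝ, cesSup M (fun k => x k - x k) ρ = 0 := by
    intro ρ
    unfold cesSup cesTerm
    simp [hM.2.2.2.1]
  refine le_antisymm ?_ (eta2_nonneg x x)
  by_contra hc
  push_neg at hc
  have h2 : eta2 M x x ≤ eta2 M x x / 2 :=
    eta2_le_of (by linarith) (by rw [h0]; exact zero_le_one)
  linarith

omit hM in
lemma eta2_comm (x y : ℕ → ℝ) : eta2 M x y = eta2 M y x := by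
  unfold eta2
  have : ∀ ρ : ℝ, cesSup M (fun k => x k - y k) ρ = cesSup M (fun k => y k - x k) ρ := by
    intro ρ
    unfold cesSup cesTerm
    have habs : ∀ k, |x k - y k| = |y k - x k| := fun k => abs_sub_comm _ _
    simp only [habs]
  simp only [this]

lemma eta2_triangle {x y z : ℕ → ℝ} (hx : x ∈ CInftyM M) (hy : y ∈ CInftyM M)
    (hz : z ∈ CInftyM M) : eta2 M x z ≤ eta2 M x y + eta2 M y z := by
  refine le_of_forall_pos_le_add fun ε hε => ?_
  obtain ⟨ρ₁, hρ₁S, hρ₁⟩ := exists_lt_of_csInf_lt (S_nonempty hM hx hy)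
    (lt_add_of_pos_right (eta2 M x y) (by linarith : (0:ℝ) < ε/2))
  obtain ⟨ρ₂, hρ₂S, hρ₂⟩ := exists_lt_of_csInf_lt (S_nonempty hM hy hz)
    (lt_add_of_pos_right (eta2 M y z) (by linarith : (0:ℝ) < ε/2))
  have hle : eta2 M x z ≤ ρ₁ + ρ₂ :=
    eta2_le_of (by linarith [hρ₁S.1, hρ₂S.1]) (S_add hM hρ₁S.1 hρ₂S.1 hρ₁S.2 hρ₂S.2)
  linarith

lemma single_bound {x y : ℕ → ℝ} {ρ : ℝ} (hρ : 0 < ρ)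
    (h : cesSup M (fun k => x k - y k) ρ ≤ 1) (k : ℕ) :
    M (|x k - y k| / ρ) ≤ (k : ℝ) + 1 := by
  rw [cesSup_le_one_iff] at h
  have h1 := h k
  unfold cesTerm at h1
  have hk1 : (0:ℝ) < (k:ℝ) + 1 := by positivity
  have hsum : ∑ j ∈ Finset.range (k+1), M (|(fun k => x k - y k) j| / ρ) ≤ (k:ℝ) + 1 := by
    have := mul_le_mul_of_nonneg_left h1 hk1.le
    rw [mul_one, ← mul_assoc] at this
    have he : ((k:ℝ)+1) * (1/((k:ℝ)+1)) = 1 := by field_simp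
    push_cast at this ⊢
    rw [he, one_mul] at this
    exact this
  have := Finset.single_le_sum (f := fun j => M (|(fun k => x k - y k) j| / ρ))
    (fun j _ => M_nonneg hM (by positivity)) (Finset.self_mem_range_succ k)
  exact this.trans hsum

lemma eta2_eq_zero_imp {x y : ℕ → ℝ} (hx : x ∈ CInftyM M) (hy : y ∈ CInftyM M)
    (h : eta2 M x y = 0) : x = y := by
  by_contra hne
  obtain ⟨k, hk⟩ := Function.ne_iff.mp hne
  set c := |x k - y k| with hc
  have hcpos : 0 < c := abs_pos.mpr (sub_ne_zero.mpr hk)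
  obtain ⟨T, hT⟩ := (hM.2.2.2.2.2.eventually_ge_atTop ((k:ℝ)+2)).exists_forall_of_atTop
  set T' := max T 1 with hT'
  have hT'pos : (0:ℝ) < T' := lt_of_lt_of_le one_pos (le_max_right _ _)
  have hlb : ∀ ρ ∈ {ρ : ℝ | 0 < ρ ∧ cesSup M (fun k => x k - y k) ρ ≤ 1}, c / T' ≤ ρ := by
    intro ρ hρ
    by_contra hlt
    push_neg at hlt
    have hM1 : M (c / ρ) ≤ (k:ℝ) + 1 := single_bound hM hρ.1 hρ.2 k
    have hge : T' ≤ c / ρ := by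
      rw [le_div_iff₀ hρ.1]
      have h2 := (lt_div_iff₀ hT'pos).mp hlt
      nlinarith
    have := hT (c / ρ) ((le_max_left T 1).trans hge)
    linarith
  have hpos : 0 < eta2 M x y :=
    lt_of_lt_of_le (by positivity) (le_csInf (S_nonempty hM hx hy) hlb)
  rw [h] at hpos
  exact lt_irrefl _ hpos

end stage2

open Filter Topology in
theorem CInfty_complete_metric (M : ℝ → ℝ) (hM : IsOrliczFunction M) :
    ∃ inst : MetricSpace (CInftyM M),
      (∀ a b : CInftyM M, @dist _ inst.toDist a b = eta2 M a.1 b.1) ∧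
        @CompleteSpace _ inst.toUniformSpace := by
  classical
  letI inst : MetricSpace (CInftyM M) :=
    { dist := fun a b => eta2 M a.1 b.1
      dist_self := fun a => eta2_self hM a.1
      dist_comm := fun a b => eta2_comm a.1 b.1
      dist_triangle := fun a b c => eta2_triangle hM a.2 b.2 c.2
      eq_of_dist_eq_zero := fun {a b} h => Subtype.ext (eta2_eq_zero_imp hM a.2 b.2 h) }
  refine ⟨inst, fun a b => rfl, ?_⟩
  apply Metric.complete_of_cauchySeq_tendsto
  intro u hu
  rw [Metric.cauchySeq_iff] at hu
  have key : ∀ ε > (0:ℝ), ∃ N, ∀ m ≥ N, ∀ n ≥ N,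
      cesSup M (fun k => (u m).1 k - (u n).1 k) ε ≤ 1 := by
    intro ε hε
    obtain ⟨N, hN⟩ := hu ε hε
    exact ⟨N, fun m hm n hn => cesSup_le_one_of_eta2_lt hM (u m).2 (u n).2 (hN m hm n hn)⟩
  have hcoord : ∀ k : ℕ, CauchySeq (fun n => (u n).1 k) := by
    intro k
    rw [Metric.cauchySeq_iff]
    intro δ hδ
    obtain ⟨T, hT⟩ := (hM.2.2.2.2.2.eventually_ge_atTop ((k:ℝ)+2)).exists_forall_of_atTop
    set T' := max T 1 with hT'def
    have hT'pos : (0:ℝ) < T' := lt_of_lt_of_le one_pos (le_max_right _ _)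
    have hε0 : (0:ℝ) < δ/(2*T') := by positivity
    obtain ⟨N, hN⟩ := key (δ/(2*T')) hε0
    refine ⟨N, fun m hm n hn => ?_⟩
    have hb := single_bound hM hε0 (hN m hm n hn) k
    have hlt : |(u m).1 k - (u n).1 k| / (δ/(2*T')) < T' := by
      by_contra hge
      push_neg at hge
      have := hT _ ((le_max_left T 1).trans hge)
      linarith
    rw [Real.dist_eq]
    have := (div_lt_iff₀ hε0).mp hlt
    calc |(u m).1 k - (u n).1 k| < T' * (δ/(2*T')) := this
      _ = δ/2 := by field_simp
      _ < δ := by linarith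
  choose L hL using fun k => cauchySeq_tendsto_of_complete (hcoord k)
  have main : ∀ ε > (0:ℝ), ∃ N, ∀ n ≥ N,
      cesSup M (fun k => (u n).1 k - L k) ε ≤ 1 := by
    intro ε hε
    obtain ⟨N, hN⟩ := key ε hε
    refine ⟨N, fun n hn => ?_⟩
    rw [cesSup_le_one_iff]
    intro i
    have htend : Tendsto (fun m => cesTerm M (fun k => (u n).1 k - (u m).1 k) ε i) atTop
        (𝓝 (cesTerm M (fun k => (u n).1 k - L k) ε i)) := by
      unfold cesTerm
      apply Tendsto.const_mul
      apply tendsto_finset_sum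
      intro k _
      have hv : Tendsto (fun m => |(u n).1 k - (u m).1 k| / ε) atTop
          (𝓝 (|(u n).1 k - L k| / ε)) := (((hL k).const_sub _).abs).div_const ε
      have hvin : ∀ m, |(u n).1 k - (u m).1 k| / ε ∈ Set.Ici (0:ℝ) := fun m => Set.mem_Ici.mpr (by positivity)
      have hcw : ContinuousWithinAt M (Set.Ici 0) (|(u n).1 k - L k| / ε) :=
        hM.1 _ (Set.mem_Ici.mpr (by positivity))
      exact hcw.tendsto.comp (tendsto_nhdsWithin_of_tendsto_nhds_of_eventually_within _ hv
        (Filter.Eventually.of_forall hvin))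
    refine le_of_tendsto htend ?_
    filter_upwards [Filter.eventually_ge_atTop N] with m hm
    exact (cesSup_le_one_iff _ _).mp (hN n hn m hm) i
  obtain ⟨N₁, hN₁⟩ := main 1 one_pos
  have hdiff : (fun k => (u N₁).1 k - L k) ∈ CInftyM M :=
    ⟨1, one_pos, lt_of_le_of_lt (hN₁ N₁ le_rfl) ENNReal.one_lt_top⟩
  have hLmem : L ∈ CInftyM M := by
    have heq : L = (fun k => (u N₁).1 k - ((fun j => (u N₁).1 j - L j) k)) := by
      funext k; ring
    rw [heq]
    exact cin_sub_mem hM (u N₁).2 hdiff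
  refine ⟨⟨L, hLmem⟩, ?_⟩
  rw [Metric.tendsto_atTop]
  intro ε hε
  obtain ⟨N, hN⟩ := main (ε/2) (by linarith)
  refine ⟨N, fun n hn => ?_⟩
  have hd : dist (u n) (⟨L, hLmem⟩ : CInftyM M) = eta2 M (u n).1 L := rfl
  rw [hd]
  calc eta2 M (u n).1 L ≤ ε/2 := eta2_le_of (by linarith) (hN n hn)
    _ < ε := by linarith
end

section
/- Let M be an Orlicz function and 1 ≤ p < ∞. Then ℓ_p(M) = { real sequences x = (x_k)_{k≥1} : there exists ρ > 0 with Σ_{k=1}^∞ (M(|x_k|/ρ))^p < ∞ } is a complete metric space with respect to the metric η₃(x,y) = inf{ ρ > 0 : (Σ_{k=1}^∞ (M(|x_k − y_k|/ρ))^p)^{1/p} ≤ 1 }. -/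
/-!
`η₃(x, y)` is the Luxemburg norm of `x - y`: the infimum of the admissible scales `ρ > 0`, those
with `∑ M(|u_k|/ρ)^p ≤ 1`. Convexity of `M` combined with Minkowski's inequality in `ℓ^p` shows
that `ρ₁ + ρ₂` is admissible for `u + v` whenever `ρ₁, ρ₂` are admissible for `u, v`, which is the
triangle inequality. Choosing `d` with `M d > 1`, every admissible scale `ρ` of `u` bounds
`|u_k| ≤ d ρ`; this gives definiteness and makes Cauchy sequences converge coordinatewise. The
coordinatewise limit is the `η₃`-limit because `u ↦ ∑ M(|u_k|/ρ)^p` is lower semicontinuous for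
coordinatewise convergence (Fatou).
-/

open scoped ENNReal

/-- `∑_{k=1}^∞ (M (|x_k| / ρ))^p`, valued in `ℝ≥0∞`. -/
noncomputable def lpSum (M : ℝ → ℝ) (p : ℝ) (x : ℕ → ℝ) (ρ : ℝ) : ℝ≥0∞ :=
  ∑' k : ℕ, ENNReal.ofReal (M (|x k| / ρ)) ^ p

/-- The space `ℓ_p(M)`. -/
def lpM (M : ℝ → ℝ) (p : ℝ) : Set (ℕ → ℝ) :=
  {x | ∃ ρ > 0, lpSum M p x ρ < ⊤}

/-- The metric `η₃`. -/
noncomputable def eta3 (M : ℝ → ℝ) (p : ℝ) (x y : ℕ → ℝ) : ℝ :=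
  sInf {ρ : ℝ | 0 < ρ ∧ (lpSum M p (fun k => x k - y k) ρ) ^ (1 / p) ≤ 1}

open Filter

namespace ENNReal

theorem Lp_add_le_tsum {ι : Type*} {p : ℝ} (hp : 1 ≤ p) (f g : ι → ℝ≥0∞) :
    (∑' i, (f i + g i) ^ p) ^ (1 / p) ≤
      (∑' i, f i ^ p) ^ (1 / p) + (∑' i, g i ^ p) ^ (1 / p) := by
  let : MeasurableSpace ι := ⊤
  simpa only [MeasureTheory.lintegral_count, Pi.add_apply] using
    ENNReal.lintegral_Lp_add_le (μ := .count) (measurable_from_top (f := f)).aemeasurable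
      (measurable_from_top (f := g)).aemeasurable hp

theorem tsum_const_mul_rpow_rpow_one_div {ι : Type*} {p : ℝ} (hp : 0 < p) (c : ℝ≥0∞)
    (f : ι → ℝ≥0∞) : (∑' i, (c * f i) ^ p) ^ (1 / p) = c * (∑' i, f i ^ p) ^ (1 / p) := by
  simp_rw [ENNReal.mul_rpow_of_nonneg _ _ hp.le]
  rw [ENNReal.tsum_mul_left, ENNReal.mul_rpow_of_nonneg _ _ (by positivity), ← ENNReal.rpow_mul,
    mul_one_div_cancel hp.ne', ENNReal.rpow_one]

end ENNReal

namespace IsOrliczFunction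

variable {M : ℝ → ℝ}

theorem mono (hM : IsOrliczFunction M) {a b : ℝ} (ha : 0 ≤ a) (hab : a ≤ b) : M a ≤ M b :=
  hM.2.1 ha (ha.trans hab) hab

theorem nonneg (hM : IsOrliczFunction M) {t : ℝ} (ht : 0 ≤ t) : 0 ≤ M t :=
  hM.2.2.2.1 ▸ hM.mono le_rfl ht

theorem exists_one_lt (hM : IsOrliczFunction M) : ∃ d, 0 < d ∧ 1 < M d :=
  ((hM.2.2.2.2.2.eventually_gt_atTop 1).and (eventually_gt_atTop 0)).exists.imp
    fun _ h => ⟨h.2, h.1⟩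

theorem map_mul_le (hM : IsOrliczFunction M) {c t : ℝ} (hc₀ : 0 ≤ c) (hc₁ : c ≤ 1)
    (ht : 0 ≤ t) : M (c * t) ≤ c * M t := by
  have h := hM.2.2.1.2 (Set.mem_Ici.2 ht) (Set.mem_Ici.2 le_rfl) hc₀ (sub_nonneg.2 hc₁)
    (add_sub_cancel c 1)
  simpa [hM.2.2.2.1] using h

theorem map_add_div_add_le (hM : IsOrliczFunction M) {a b ρ₁ ρ₂ : ℝ} (ha : 0 ≤ a) (hb : 0 ≤ b)
    (h₁ : 0 < ρ₁) (h₂ : 0 < ρ₂) :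
    M ((a + b) / (ρ₁ + ρ₂)) ≤ ρ₁ / (ρ₁ + ρ₂) * M (a / ρ₁) + ρ₂ / (ρ₁ + ρ₂) * M (b / ρ₂) := by
  have h := hM.2.2.1.2 (Set.mem_Ici.2 (div_nonneg ha h₁.le)) (Set.mem_Ici.2 (div_nonneg hb h₂.le))
    (div_nonneg h₁.le (add_pos h₁ h₂).le) (div_nonneg h₂.le (add_pos h₁ h₂).le)
    (by rw [← add_div, div_self (add_pos h₁ h₂).ne'])
  have harg : ρ₁ / (ρ₁ + ρ₂) * (a / ρ₁) + ρ₂ / (ρ₁ + ρ₂) * (b / ρ₂) = (a + b) / (ρ₁ + ρ₂) := by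
    field_simp
  simpa only [smul_eq_mul, harg] using h

end IsOrliczFunction

section lpSum

variable {M : ℝ → ℝ} {p : ℝ}

theorem lpSum_neg (u : ℕ → ℝ) (ρ : ℝ) : lpSum M p (-u) ρ = lpSum M p u ρ := by
  simp only [lpSum, Pi.neg_apply, abs_neg]

theorem lpSum_antitoneOn (hM : IsOrliczFunction M) (hp : 0 ≤ p) (u : ℕ → ℝ) :
    AntitoneOn (lpSum M p u) (Set.Ioi 0) := fun _ h₁ _ h₂ h =>
  ENNReal.tsum_le_tsum fun _ => ENNReal.rpow_le_rpow (ENNReal.ofReal_le_ofReal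
    (hM.mono (div_nonneg (abs_nonneg _) (le_of_lt h₂))
      (div_le_div_of_nonneg_left (abs_nonneg _) h₁ h))) hp

theorem lpSum_mul_le (hM : IsOrliczFunction M) (hp : 1 ≤ p) (u : ℕ → ℝ) {c ρ : ℝ} (hc : 1 ≤ c)
    (hρ : 0 < ρ) : lpSum M p u (c * ρ) ≤ ENNReal.ofReal c⁻¹ * lpSum M p u ρ := by
  rw [lpSum, lpSum, ← ENNReal.tsum_mul_left]
  refine ENNReal.tsum_le_tsum fun k => ?_
  have hc₀ : 0 < c := zero_lt_one.trans_le hc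
  have harg : |u k| / (c * ρ) = c⁻¹ * (|u k| / ρ) := by field_simp
  calc ENNReal.ofReal (M (|u k| / (c * ρ))) ^ p
      ≤ (ENNReal.ofReal c⁻¹ * ENNReal.ofReal (M (|u k| / ρ))) ^ p := by
        rw [← ENNReal.ofReal_mul (by positivity), harg]
        gcongr
        exact hM.map_mul_le (by positivity) (inv_le_one_of_one_le₀ hc) (by positivity)
    _ = ENNReal.ofReal c⁻¹ ^ p * ENNReal.ofReal (M (|u k| / ρ)) ^ p :=
        ENNReal.mul_rpow_of_nonneg _ _ (zero_le_one.trans hp)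
    _ ≤ ENNReal.ofReal c⁻¹ * ENNReal.ofReal (M (|u k| / ρ)) ^ p := by
        gcongr
        exact ENNReal.rpow_le_self_of_le_one
          (ENNReal.ofReal_le_one.2 (inv_le_one_of_one_le₀ hc)) hp

theorem lpSum_add_rpow_one_div_le (hM : IsOrliczFunction M) (hp : 1 ≤ p) (u v : ℕ → ℝ)
    {ρ₁ ρ₂ : ℝ} (h₁ : 0 < ρ₁) (h₂ : 0 < ρ₂) :
    lpSum M p (u + v) (ρ₁ + ρ₂) ^ (1 / p) ≤
      ENNReal.ofReal (ρ₁ / (ρ₁ + ρ₂)) * lpSum M p u ρ₁ ^ (1 / p) +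
        ENNReal.ofReal (ρ₂ / (ρ₁ + ρ₂)) * lpSum M p v ρ₂ ^ (1 / p) := by
  have hp₀ : 0 < p := zero_lt_one.trans_le hp
  have hterm : ∀ k, ENNReal.ofReal (M (|(u + v) k| / (ρ₁ + ρ₂))) ≤
      ENNReal.ofReal (ρ₁ / (ρ₁ + ρ₂)) * ENNReal.ofReal (M (|u k| / ρ₁)) +
        ENNReal.ofReal (ρ₂ / (ρ₁ + ρ₂)) * ENNReal.ofReal (M (|v k| / ρ₂)) := by
    intro k
    rw [← ENNReal.ofReal_mul (by positivity), ← ENNReal.ofReal_mul (by positivity),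
      ← ENNReal.ofReal_add (mul_nonneg (by positivity) (hM.nonneg (by positivity)))
        (mul_nonneg (by positivity) (hM.nonneg (by positivity)))]
    refine ENNReal.ofReal_le_ofReal ((hM.mono (by positivity) ?_).trans
      (hM.map_add_div_add_le (abs_nonneg (u k)) (abs_nonneg (v k)) h₁ h₂))
    gcongr
    exact abs_add_le (u k) (v k)
  calc lpSum M p (u + v) (ρ₁ + ρ₂) ^ (1 / p)
      ≤ (∑' k, (ENNReal.ofReal (ρ₁ / (ρ₁ + ρ₂)) * ENNReal.ofReal (M (|u k| / ρ₁)) +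
          ENNReal.ofReal (ρ₂ / (ρ₁ + ρ₂)) * ENNReal.ofReal (M (|v k| / ρ₂))) ^ p) ^ (1 / p) := by
        unfold lpSum
        gcongr with k
        exact hterm k
    _ ≤ _ := ENNReal.Lp_add_le_tsum hp _ _
    _ = _ := by
        rw [ENNReal.tsum_const_mul_rpow_rpow_one_div hp₀,
          ENNReal.tsum_const_mul_rpow_rpow_one_div hp₀]
        rfl

theorem lowerSemicontinuous_lpSum (hM : IsOrliczFunction M) {ρ : ℝ} (hρ : 0 ≤ ρ) :
    LowerSemicontinuous fun u : ℕ → ℝ => lpSum M p u ρ := by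
  have hterm : Continuous fun t : ℝ => ENNReal.ofReal (M (|t| / ρ)) ^ p :=
    (ENNReal.continuous_rpow_const.comp ENNReal.continuous_ofReal).comp
      (hM.1.comp_continuous (continuous_abs.div_const ρ) fun t => div_nonneg (abs_nonneg t) hρ)
  exact lowerSemicontinuous_tsum fun k => (hterm.comp (continuous_apply k)).lowerSemicontinuous

end lpSum

section lpM

open Pointwise

variable {M : ℝ → ℝ} {p : ℝ}

theorem add_mem_lpM (hM : IsOrliczFunction M) (hp : 1 ≤ p) {u v : ℕ → ℝ} (hu : u ∈ lpM M p)
    (hv : v ∈ lpM M p) : u + v ∈ lpM M p := by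
  obtain ⟨ρ₁, h₁, hu⟩ := hu
  obtain ⟨ρ₂, h₂, hv⟩ := hv
  have hp' : 0 < 1 / p := one_div_pos.2 (zero_lt_one.trans_le hp)
  refine ⟨ρ₁ + ρ₂, add_pos h₁ h₂, (ENNReal.rpow_lt_top_iff_of_pos hp').1 ?_⟩
  refine (lpSum_add_rpow_one_div_le hM hp u v h₁ h₂).trans_lt (ENNReal.add_lt_top.2 ⟨?_, ?_⟩)
  · exact ENNReal.mul_lt_top ENNReal.ofReal_lt_top ((ENNReal.rpow_lt_top_iff_of_pos hp').2 hu)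
  · exact ENNReal.mul_lt_top ENNReal.ofReal_lt_top ((ENNReal.rpow_lt_top_iff_of_pos hp').2 hv)

theorem neg_mem_lpM {u : ℕ → ℝ} (hu : u ∈ lpM M p) : -u ∈ lpM M p :=
  let ⟨ρ, hρ, hfin⟩ := hu
  ⟨ρ, hρ, by rwa [lpSum_neg]⟩

theorem sub_mem_lpM (hM : IsOrliczFunction M) (hp : 1 ≤ p) {u v : ℕ → ℝ} (hu : u ∈ lpM M p)
    (hv : v ∈ lpM M p) : u - v ∈ lpM M p :=
  sub_eq_add_neg u v ▸ add_mem_lpM hM hp hu (neg_mem_lpM hv)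

def admissibleScales (M : ℝ → ℝ) (p : ℝ) (u : ℕ → ℝ) : Set ℝ :=
  {ρ | 0 < ρ ∧ lpSum M p u ρ ≤ 1}

/-- The Luxemburg norm; it takes the junk value `sInf ∅ = 0` when `u ∉ lpM M p`. -/
noncomputable def luxNorm (M : ℝ → ℝ) (p : ℝ) (u : ℕ → ℝ) : ℝ :=
  sInf (admissibleScales M p u)

theorem eta3_eq_luxNorm (hp : 0 < p) (x y : ℕ → ℝ) : eta3 M p x y = luxNorm M p (x - y) := by
  simp only [eta3, luxNorm, admissibleScales, one_div, ENNReal.rpow_inv_le_iff hp,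
    ENNReal.one_rpow]
  rfl

theorem bddBelow_admissibleScales (u : ℕ → ℝ) : BddBelow (admissibleScales M p u) :=
  ⟨0, fun _ h => h.1.le⟩

theorem mem_lpM_of_mem_admissibleScales {u : ℕ → ℝ} {ρ : ℝ} (h : ρ ∈ admissibleScales M p u) :
    u ∈ lpM M p :=
  ⟨ρ, h.1, h.2.trans_lt ENNReal.one_lt_top⟩

theorem admissibleScales_nonempty (hM : IsOrliczFunction M) (hp : 1 ≤ p) {u : ℕ → ℝ}
    (hu : u ∈ lpM M p) : (admissibleScales M p u).Nonempty := by
  obtain ⟨ρ, hρ, hfin⟩ := hu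
  obtain ⟨c, hc, hLc⟩ : ∃ c : ℝ, 1 ≤ c ∧ (lpSum M p u ρ).toReal ≤ c :=
    ⟨_, le_max_left _ _, le_max_right _ _⟩
  have hc₀ : 0 < c := zero_lt_one.trans_le hc
  refine ⟨c * ρ, mul_pos hc₀ hρ, (lpSum_mul_le hM hp u hc hρ).trans ?_⟩
  rw [← ENNReal.ofReal_toReal hfin.ne, ← ENNReal.ofReal_mul (inv_nonneg.2 hc₀.le),
    ENNReal.ofReal_le_one, inv_mul_le_iff₀ hc₀, mul_one]
  exact hLc

theorem add_mem_admissibleScales (hM : IsOrliczFunction M) (hp : 1 ≤ p) {u v : ℕ → ℝ}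
    {ρ₁ ρ₂ : ℝ} (h₁ : ρ₁ ∈ admissibleScales M p u) (h₂ : ρ₂ ∈ admissibleScales M p v) :
    ρ₁ + ρ₂ ∈ admissibleScales M p (u + v) := by
  have rpow_le_one : ∀ {x : ℝ≥0∞}, x ^ (1 / p) ≤ 1 ↔ x ≤ 1 := by
    intro x
    rw [one_div, ENNReal.rpow_inv_le_iff (zero_lt_one.trans_le hp), ENNReal.one_rpow]
  have hρ := add_pos h₁.1 h₂.1
  refine ⟨hρ, rpow_le_one.1 ?_⟩
  calc lpSum M p (u + v) (ρ₁ + ρ₂) ^ (1 / p)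
      ≤ _ := lpSum_add_rpow_one_div_le hM hp u v h₁.1 h₂.1
    _ ≤ ENNReal.ofReal (ρ₁ / (ρ₁ + ρ₂)) * 1 + ENNReal.ofReal (ρ₂ / (ρ₁ + ρ₂)) * 1 := by
        gcongr
        exacts [rpow_le_one.2 h₁.2, rpow_le_one.2 h₂.2]
    _ = 1 := by
        rw [mul_one, mul_one, ← ENNReal.ofReal_add (div_nonneg h₁.1.le hρ.le)
          (div_nonneg h₂.1.le hρ.le), ← add_div, div_self hρ.ne', ENNReal.ofReal_one]

theorem abs_le_mul_of_mem_admissibleScales (hM : IsOrliczFunction M) (hp : 0 < p) {d : ℝ}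
    (hd₀ : 0 ≤ d) (hd : 1 < M d) {u : ℕ → ℝ} {ρ : ℝ} (hρ : ρ ∈ admissibleScales M p u) (k : ℕ) :
    |u k| ≤ d * ρ := by
  obtain ⟨hρ₀, hsum⟩ := hρ
  have hterm : ENNReal.ofReal (M (|u k| / ρ)) ^ p ≤ 1 ^ p :=
    (ENNReal.one_rpow p).symm ▸ (ENNReal.le_tsum k).trans hsum
  have hM₁ : M (|u k| / ρ) ≤ 1 :=
    ENNReal.ofReal_le_one.1 ((ENNReal.rpow_le_rpow_iff hp).1 hterm)
  by_contra! h
  have hdu : d ≤ |u k| / ρ := by rw [le_div_iff₀ hρ₀]; exact h.le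
  linarith [hM.mono hd₀ hdu]

theorem luxNorm_le {u : ℕ → ℝ} {ρ : ℝ} (h : ρ ∈ admissibleScales M p u) : luxNorm M p u ≤ ρ :=
  csInf_le (bddBelow_admissibleScales u) h

theorem mem_admissibleScales_of_luxNorm_lt (hM : IsOrliczFunction M) (hp : 1 ≤ p) {u : ℕ → ℝ}
    {ε : ℝ} (hu : u ∈ lpM M p) (h : luxNorm M p u < ε) : ε ∈ admissibleScales M p u := by
  obtain ⟨ρ, ⟨hρ₀, hρ⟩, hρε⟩ := exists_lt_of_csInf_lt (admissibleScales_nonempty hM hp hu) h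
  exact ⟨hρ₀.trans hρε,
    (lpSum_antitoneOn hM (zero_le_one.trans hp) u hρ₀ (hρ₀.trans hρε) hρε.le).trans hρ⟩

theorem abs_le_mul_luxNorm (hM : IsOrliczFunction M) (hp : 1 ≤ p) {d : ℝ} (hd₀ : 0 < d)
    (hd : 1 < M d) {u : ℕ → ℝ} (hu : u ∈ lpM M p) (k : ℕ) : |u k| ≤ d * luxNorm M p u := by
  rw [← div_le_iff₀' hd₀]
  refine le_csInf (admissibleScales_nonempty hM hp hu) fun ρ hρ => (div_le_iff₀' hd₀).2 ?_
  exact abs_le_mul_of_mem_admissibleScales hM (zero_lt_one.trans_le hp) hd₀.le hd hρ k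

theorem luxNorm_zero (hM : IsOrliczFunction M) (hp : 0 < p) : luxNorm M p 0 = 0 := by
  have h : admissibleScales M p 0 = Set.Ioi 0 := by
    ext ρ
    simp [admissibleScales, lpSum, hM.2.2.2.1, ENNReal.zero_rpow_of_pos hp]
  rw [luxNorm, h, csInf_Ioi]

theorem luxNorm_neg (u : ℕ → ℝ) : luxNorm M p (-u) = luxNorm M p u := by
  simp only [luxNorm, admissibleScales, lpSum_neg]

theorem luxNorm_add_le (hM : IsOrliczFunction M) (hp : 1 ≤ p) {u v : ℕ → ℝ} (hu : u ∈ lpM M p)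
    (hv : v ∈ lpM M p) : luxNorm M p (u + v) ≤ luxNorm M p u + luxNorm M p v := by
  have hSu := admissibleScales_nonempty hM hp hu
  have hSv := admissibleScales_nonempty hM hp hv
  rw [luxNorm, luxNorm, luxNorm, ← csInf_add hSu (bddBelow_admissibleScales u) hSv
    (bddBelow_admissibleScales v)]
  refine csInf_le_csInf (bddBelow_admissibleScales _) (hSu.add hSv) ?_
  rintro _ ⟨ρ₁, h₁, ρ₂, h₂, rfl⟩
  exact add_mem_admissibleScales hM hp h₁ h₂

theorem eq_zero_of_luxNorm_eq_zero (hM : IsOrliczFunction M) (hp : 1 ≤ p) {u : ℕ → ℝ}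
    (hu : u ∈ lpM M p) (h : luxNorm M p u = 0) : u = 0 := by
  obtain ⟨d, hd₀, hd⟩ := hM.exists_one_lt
  funext k
  simpa [h] using abs_le_mul_luxNorm hM hp hd₀ hd hu k

end lpM

section metric

variable {M : ℝ → ℝ} {p : ℝ}

@[reducible] noncomputable def lpM.metricSpace (hM : IsOrliczFunction M) (hp : 1 ≤ p) :
    MetricSpace (lpM M p) where
  dist a b := eta3 M p a b
  dist_self a := by
    rw [eta3_eq_luxNorm (zero_lt_one.trans_le hp), sub_self,
      luxNorm_zero hM (zero_lt_one.trans_le hp)]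
  dist_comm a b := by
    rw [eta3_eq_luxNorm (zero_lt_one.trans_le hp), eta3_eq_luxNorm (zero_lt_one.trans_le hp),
      ← neg_sub, luxNorm_neg]
  dist_triangle a b c := by
    simp only [eta3_eq_luxNorm (zero_lt_one.trans_le hp)]
    rw [← sub_add_sub_cancel a.1 b.1 c.1]
    exact luxNorm_add_le hM hp (sub_mem_lpM hM hp a.2 b.2) (sub_mem_lpM hM hp b.2 c.2)
  eq_of_dist_eq_zero {a b} h := by
    rw [eta3_eq_luxNorm (zero_lt_one.trans_le hp)] at h
    exact Subtype.ext
      (sub_eq_zero.1 (eq_zero_of_luxNorm_eq_zero hM hp (sub_mem_lpM hM hp a.2 b.2) h))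

theorem completeSpace_lpM (hM : IsOrliczFunction M) (hp : 1 ≤ p) :
    @CompleteSpace (lpM M p) (lpM.metricSpace hM hp).toUniformSpace := by
  let := lpM.metricSpace hM hp
  -- the subtype already carries the uniformity induced by the product topology on `ℕ → ℝ`
  let : UniformSpace (lpM M p) := PseudoMetricSpace.toUniformSpace
  have dist_eq (a b : lpM M p) : dist a b = luxNorm M p (a.1 - b.1) :=
    eta3_eq_luxNorm (zero_lt_one.trans_le hp) a b
  refine Metric.complete_of_cauchySeq_tendsto fun u hu => ?_
  have hcoord (k : ℕ) : CauchySeq fun n => (u n).1 k := by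
    obtain ⟨d, hd₀, hd⟩ := hM.exists_one_lt
    have hlip : LipschitzWith d.toNNReal fun a : lpM M p => a.1 k :=
      LipschitzWith.of_dist_le_mul fun a b => by
        rw [Real.dist_eq, Real.coe_toNNReal _ hd₀.le, dist_eq]
        exact abs_le_mul_luxNorm hM hp hd₀ hd (sub_mem_lpM hM hp a.2 b.2) k
    exact hlip.uniformContinuous.comp_cauchySeq hu
  choose x hx using fun k => cauchySeq_tendsto_of_complete (hcoord k)
  have hlim : ∀ ε > 0, ∀ᶠ n in atTop, ε ∈ admissibleScales M p ((u n).1 - x) := by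
    intro ε hε
    obtain ⟨N, hN⟩ := Metric.cauchySeq_iff.1 hu ε hε
    refine eventually_atTop.2 ⟨N, fun n hn => ⟨hε, ?_⟩⟩
    refine ((lowerSemicontinuous_lpSum hM hε.le).isClosed_preimage 1).mem_of_tendsto
      (tendsto_pi_nhds.2 fun k => tendsto_const_nhds.sub (hx k))
      (eventually_atTop.2 ⟨N, fun m hm => ?_⟩)
    have hnm := (dist_eq _ _).symm.trans_lt (hN n hn m hm)
    exact (mem_admissibleScales_of_luxNorm_lt hM hp (sub_mem_lpM hM hp (u n).2 (u m).2) hnm).2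
  obtain ⟨N, hN⟩ := (hlim 1 one_pos).exists
  have hxmem : x ∈ lpM M p := by
    simpa using sub_mem_lpM hM hp (u N).2 (mem_lpM_of_mem_admissibleScales hN)
  refine ⟨⟨x, hxmem⟩, Metric.tendsto_nhds.2 fun ε hε => ?_⟩
  filter_upwards [hlim (ε / 2) (half_pos hε)] with n hn
  rw [dist_eq]
  exact (luxNorm_le hn).trans_lt (half_lt_self hε)

end metric

theorem lp_complete_metric (M : ℝ → ℝ) (hM : IsOrliczFunction M) (p : ℝ) (hp : 1 ≤ p) :
    ∃ inst : MetricSpace (lpM M p),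
      (∀ a b : lpM M p, @dist _ inst.toDist a b = eta3 M p a.1 b.1) ∧
        @CompleteSpace _ inst.toUniformSpace :=
  ⟨lpM.metricSpace hM hp, fun _ _ => rfl, completeSpace_lpM hM hp⟩
end
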